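/- Forgetting a variable from a DNNF circuit can be done by substitution with true: if an NNF circuit N is decomposable and a variable V occurs only positively or only in leaves, then replacing every leaf labeled with a literal of V by the constant ⊤ yields a decomposable circuit N' computing ∃V applied to the function of N. More precisely: for any decomposable NNF circuit N over variables X ∪ {V}, the circuit N' obtained by replacing all leaves labeled V or ¬V with ⊤ computes a function F' such that F' ≡ ∃V. F, where F is the function computed by N. -/
import Mathlib


/-- NNF circuits. -/
inductive NNF (V : Type) where
  | tru : NNF V
  | fls : NNF V
  | lit (v : V) (pos : Bool) : NNF V
  | conj (l r : NNF V) : NNF V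
  | disj (l r : NNF V) : NNF V

namespace NNF

def eval {V : Type} (x : V → Bool) : NNF V → Bool
  | tru => true
  | fls => false
  | lit v pos => if pos then x v else !(x v)
  | conj l r => eval x l && eval x r
  | disj l r => eval x l || eval x r

def vars {V : Type} : NNF V → Set V
  | tru => ∅
  | fls => ∅
  | lit v _ => {v}
  | conj l r => vars l ∪ vars r
  | disj l r => vars l ∪ vars r

/-- Every conjunction node is decomposable. -/
def Decomposable {V : Type} : NNF V → Prop
  | tru => True
  | fls => True
  | lit _ _ => True
  | conj l r => Disjoint (vars l) (vars r) ∧ Decomposable l ∧ Decomposable r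
  | disj l r => Decomposable l ∧ Decomposable r

/-- Replace all leaves labelled with a literal of `Y` by ⊤. -/
def forget {V : Type} [DecidableEq V] (Y : V) : NNF V → NNF V
  | tru => tru
  | fls => fls
  | lit v pos => if v = Y then tru else lit v pos
  | conj l r => conj (forget Y l) (forget Y r)
  | disj l r => disj (forget Y l) (forget Y r)

end NNF


namespace NNF

lemma eval_update_of_notMem {V : Type} [DecidableEq V] {Y : V} {N : NNF V}
    (h : Y ∉ N.vars) (x : V → Bool) (b : Bool) :
    N.eval (Function.update x Y b) = N.eval x := by
  induction N with
  | tru => rfl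
  | fls => rfl
  | lit v pos =>
    have : v ≠ Y := by rintro rfl; exact h rfl
    simp [eval, Function.update_of_ne this]
  | conj l r ihl ihr =>
    simp only [vars, Set.mem_union, not_or] at h
    simp [eval, ihl h.1, ihr h.2]
  | disj l r ihl ihr =>
    simp only [vars, Set.mem_union, not_or] at h
    simp [eval, ihl h.1, ihr h.2]

lemma forget_of_notMem {V : Type} [DecidableEq V] {Y : V} {N : NNF V}
    (h : Y ∉ N.vars) : N.forget Y = N := by
  induction N with
  | tru => rfl
  | fls => rfl
  | lit v pos =>
    have : v ≠ Y := by rintro rfl; exact h rfl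
    simp [forget, this]
  | conj l r ihl ihr =>
    simp only [vars, Set.mem_union, not_or] at h
    simp [forget, ihl h.1, ihr h.2]
  | disj l r ihl ihr =>
    simp only [vars, Set.mem_union, not_or] at h
    simp [forget, ihl h.1, ihr h.2]

end NNF

/-- on a decomposable circuit, replacing the leaves of `Y` by ⊤
computes ∃Y. F = F|Y ∨ F|¬Y. -/
theorem stmt_12 {V : Type} [DecidableEq V] (N : NNF V)
    (hdec : NNF.Decomposable N) (Y : V) :
    ∀ x : V → Bool,
      (NNF.forget Y N).eval x
      = (N.eval (Function.update x Y true) || N.eval (Function.update x Y false)) := by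
  induction N with
  | tru => intro x; rfl
  | fls => intro x; rfl
  | lit v pos =>
    intro x
    by_cases h : v = Y
    · subst h
      cases pos <;> simp [NNF.forget, NNF.eval, Function.update_self]
    · simp [NNF.forget, h, NNF.eval, Function.update_of_ne h]
  | conj l r ihl ihr =>
    intro x
    obtain ⟨hdisj, hl, hr⟩ := hdec
    have hY : Y ∉ l.vars ∨ Y ∉ r.vars := by
      by_contra hc
      push_neg at hc
      exact (Set.disjoint_left.mp hdisj hc.1) hc.2
    rcases hY with h | h
    · simp only [NNF.forget, NNF.eval, NNF.forget_of_notMem h,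
        NNF.eval_update_of_notMem h, ihr hr x]
      cases l.eval x <;> simp
    · simp only [NNF.forget, NNF.eval, NNF.forget_of_notMem h,
        NNF.eval_update_of_notMem h, ihl hl x]
      cases r.eval x <;> simp [Bool.and_or_distrib_right]
  | disj l r ihl ihr =>
    intro x
    obtain ⟨hl, hr⟩ := hdec
    simp only [NNF.forget, NNF.eval, ihl hl x, ihr hr x]
    cases l.eval (Function.update x Y true) <;> cases r.eval (Function.update x Y true) <;> simp
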